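/- (Lemma 2.4, monotonicity part) Let n ≥ 2, let X_1, ..., X_n be i.i.d. random variables taking values in [0,1] with essential infimum inf{x ∈ ℝ : P(X_1 ≤ x) > 0} = 0 and essential supremum sup{x ∈ ℝ : P(X_1 ≤ x) < 1} = 1, let c > 0 with E(X_1) > c, and let Y_i = X_i - i·c. Setting v_i = V(Y_1,...,Y_i) for i = 1,...,n-1, one has 1 > v_{n-1} > v_{n-2} > ··· > v_2 > v_1 > 0. -/

import Mathlib

open MeasureTheory ProbabilityTheory

/-- The σ-algebra generated by `Y 1, ..., Y i`. -/
def priorSigma {Ω : Type*} (Y : ℕ → Ω → ℝ) (i : ℕ) : MeasurableSpace Ω :=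
  ⨆ j ∈ Finset.Icc 1 i, MeasurableSpace.comap (Y j) Real.measurableSpace

/-- `τ` is a stopping rule for `Y 1, ..., Y n`: it takes values in `{1, ..., n}` and
each event `{τ = i}` depends only on `Y 1, ..., Y i`. -/
def IsStopRule {Ω : Type*} (Y : ℕ → Ω → ℝ) (n : ℕ) (τ : Ω → ℕ) : Prop :=
  (∀ ω, τ ω ∈ Finset.Icc 1 n) ∧
  ∀ i ∈ Finset.Icc 1 n, MeasurableSet[priorSigma Y i] {ω | τ ω = i}

/-- `V(Y_1,...,Y_n) = sup_τ E(Y_τ)`: the optimal expected return of the statistician. -/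
noncomputable def Vn {Ω : Type*} [MeasurableSpace Ω] (μ : Measure Ω)
    (Y : ℕ → Ω → ℝ) (n : ℕ) : ℝ :=
  sSup {r | ∃ τ, IsStopRule Y n τ ∧ r = ∫ ω, Y (τ ω) ω ∂μ}

/-- `M(Y_1,...,Y_n) = E(max_{1 ≤ i ≤ n} Y_i)`: the expected return of the prophet. -/
noncomputable def Mn {Ω : Type*} [MeasurableSpace Ω] (μ : Measure Ω)
    (Y : ℕ → Ω → ℝ) (n : ℕ) : ℝ :=
  ∫ ω, sSup ((fun i => Y i ω) '' Set.Icc 1 n) ∂μ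

/-! With `w 0 = 0` and `w (d + 1) = E max (X₁, w d) - c`, the value of the problem with `k`
observations is `w k`. Indeed, after `i` observations the remaining problem is the original one
with `k - i` observations, shifted by `-i c`; since `X (i + 1)` is independent of the past, every
stopping rule `τ` satisfies `E Y_τ = w k - ∑ⱼ E (regret of τ at stage j)`, where the regret
compares `τ`'s choice with `max (X j, w (k - j))`. Regrets are nonnegative and vanish for the rule
that stops at the first `j` with `X j ≥ w (k - j)`.

Since `X₁` has positive mass below every positive level, `w` is strictly increasing, and since
`X₁ ≤ 1`, `w (d + 1) ≤ 1 - c`. -/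

section PriorSigma

variable {Ω : Type*} {X Y : ℕ → Ω → ℝ}

lemma priorSigma_eq_of_sub {g : ℕ → ℝ} (hY : ∀ i ω, Y i ω = X i ω - g i) :
    priorSigma Y = priorSigma X := by
  have hcomap : ∀ j, MeasurableSpace.comap (Y j) Real.measurableSpace
      = MeasurableSpace.comap (X j) Real.measurableSpace := by
    intro j
    have hYX : Y j = fun ω => X j ω - g j := funext (hY j)
    have hXY : X j = fun ω => Y j ω + g j := funext fun ω => by rw [hY]; ring
    apply le_antisymm
    · rw [hYX]; exact ((comap_measurable (X j)).sub_const _).comap_le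
    · rw [hXY]; exact ((comap_measurable (Y j)).add_const _).comap_le
  funext i
  simp only [priorSigma, hcomap]

lemma isStopRule_iff_of_sub {g : ℕ → ℝ} (hY : ∀ i ω, Y i ω = X i ω - g i) {n : ℕ}
    {τ : Ω → ℕ} : IsStopRule Y n τ ↔ IsStopRule X n τ := by
  rw [IsStopRule, IsStopRule, priorSigma_eq_of_sub hY]

lemma priorSigma_mono {i i' : ℕ} (h : i ≤ i') : priorSigma X i ≤ priorSigma X i' :=
  biSup_mono fun j hj => by simp only [Finset.mem_Icc] at hj ⊢; omega

lemma priorSigma_le [mΩ : MeasurableSpace Ω] (hX : ∀ i, Measurable (X i)) (i : ℕ) :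
    priorSigma X i ≤ mΩ :=
  iSup₂_le fun j _ => (hX j).comap_le

lemma measurableSet_priorSigma_preimage {i j : ℕ} (hj : j ∈ Finset.Icc 1 i) {s : Set ℝ}
    (hs : MeasurableSet s) : MeasurableSet[priorSigma X i] (X j ⁻¹' s) :=
  le_iSup₂ (f := fun j (_ : j ∈ Finset.Icc 1 i) =>
    MeasurableSpace.comap (X j) Real.measurableSpace) j hj _ ⟨s, hs, rfl⟩

lemma indep_priorSigma_comap [MeasurableSpace Ω] {μ : Measure Ω} (hX : ∀ i, Measurable (X i))
    {n : ℕ} (hindep : iIndepFun (fun i : Fin n => X (i.1 + 1)) μ) {i : ℕ} (hi : i < n) :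
    Indep (priorSigma X i) (MeasurableSpace.comap (X (i + 1)) Real.measurableSpace) μ := by
  have h := indep_iSup_of_disjoint (fun l : Fin n => (hX (l.1 + 1)).comap_le)
    ((iIndepFun_iff_iIndep _ _ _).mp hindep) (S := {l | l.1 < i}) (T := {⟨i, hi⟩})
    (Set.disjoint_singleton_right.mpr (lt_irrefl i))
  refine indep_of_indep_of_le_right (indep_of_indep_of_le_left h ?_) ?_
  · refine iSup₂_le fun j hj => ?_
    simp only [Finset.mem_Icc] at hj
    refine le_iSup₂_of_le (⟨j - 1, by omega⟩ : Fin n) (show j - 1 < i by omega) ?_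
    rw [Nat.sub_add_cancel hj.1]
  · exact le_iSup₂_of_le (⟨i, hi⟩ : Fin n) rfl le_rfl

end PriorSigma

namespace IsStopRule

variable {Ω : Type*} {X : ℕ → Ω → ℝ} {n : ℕ} {τ : Ω → ℕ}

lemma measurableSet_eq (hτ : IsStopRule X n τ) (i : ℕ) :
    MeasurableSet[priorSigma X i] {ω | τ ω = i} := by
  by_cases hi : i ∈ Finset.Icc 1 n
  · exact hτ.2 i hi
  · convert @MeasurableSet.empty _ (priorSigma X i)
    exact Set.eq_empty_of_forall_notMem fun ω h => hi (h ▸ hτ.1 ω)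

lemma measurableSet_lt (hτ : IsStopRule X n τ) (i : ℕ) :
    MeasurableSet[priorSigma X i] {ω | i < τ ω} := by
  have h : {ω | i < τ ω} = ⋂ l ∈ Finset.range (i + 1), {ω | τ ω = l}ᶜ := by
    ext ω
    simp only [Set.mem_ofPred_eq, Set.mem_iInter, Finset.mem_range, Set.mem_compl_iff]
    constructor
    · intro h l hl; omega
    · intro h; by_contra! hle; exact h (τ ω) (by omega) rfl
  rw [h]
  exact Finset.measurableSet_biInter _ fun l hl =>
    priorSigma_mono (Nat.lt_succ_iff.mp (Finset.mem_range.mp hl)) _ (hτ.measurableSet_eq l).compl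

lemma apply_eq_sum (hτ : IsStopRule X n τ) (Z : ℕ → Ω → ℝ) (ω : Ω) :
    Z (τ ω) ω = ∑ i ∈ Finset.range n, {ω | τ ω = i + 1}.indicator (Z (i + 1)) ω := by
  have hω := Finset.mem_Icc.mp (hτ.1 ω)
  rw [Finset.sum_eq_single (τ ω - 1)]
  · rw [Set.indicator_of_mem (by simp only [Set.mem_ofPred_eq]; omega), Nat.sub_add_cancel hω.1]
  · intro i _ hi
    exact Set.indicator_of_notMem (by simp only [Set.mem_ofPred_eq]; omega) _
  · intro h; exact absurd (Finset.mem_range.mpr (by omega)) h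

end IsStopRule

section StopValue

variable {Ω : Type*} [MeasurableSpace Ω] {μ : Measure Ω} {Z : Ω → ℝ} {c : ℝ}

/-- The optimal expected return with `d` observations left, net of the costs already paid. -/
noncomputable def stopValue (μ : Measure Ω) (Z : Ω → ℝ) (c : ℝ) : ℕ → ℝ
  | 0 => 0
  | d + 1 => ∫ ω, max (Z ω) (stopValue μ Z c d) ∂μ - c

lemma MeasureTheory.Integrable.max_const [IsFiniteMeasure μ] (hZ : Integrable Z μ) (v : ℝ) :
    Integrable (fun ω => max (Z ω) v) μ :=
  hZ.sup (integrable_const v)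

lemma integral_sub_le_stopValue_succ [IsFiniteMeasure μ] (hZ : Integrable Z μ) (d : ℕ) :
    ∫ ω, Z ω ∂μ - c ≤ stopValue μ Z c (d + 1) :=
  sub_le_sub_right (integral_mono hZ (hZ.max_const _) fun _ => le_max_left _ _) c

lemma stopValue_succ_le [IsProbabilityMeasure μ] (hZ : Integrable Z μ) (hZ1 : ∀ ω, Z ω ≤ 1)
    (hc : 0 ≤ c) (d : ℕ) : stopValue μ Z c (d + 1) ≤ 1 - c := by
  have hle : ∀ v ≤ 1, ∫ ω, max (Z ω) v ∂μ ≤ 1 := fun v hv => by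
    simpa using integral_mono (hZ.max_const v) (integrable_const 1) fun ω => max_le (hZ1 ω) hv
  induction d with
  | zero => exact sub_le_sub_right (hle 0 zero_le_one) c
  | succ d ih => exact sub_le_sub_right (hle _ (by linarith)) c

lemma measure_lt_pos_of_sInf_lt {b : ℝ} (hne : ∃ x, 0 < μ {ω | Z ω ≤ x})
    (hb : sInf {x | 0 < μ {ω | Z ω ≤ x}} < b) : 0 < μ {ω | Z ω < b} := by
  obtain ⟨x, hx, hxb⟩ := exists_lt_of_csInf_lt hne hb
  exact lt_of_lt_of_le hx (measure_mono fun ω hω => lt_of_le_of_lt hω hxb)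

lemma integral_max_lt_integral_max [IsFiniteMeasure μ] (hZ : Integrable Z μ) {a b : ℝ}
    (hab : a < b) (hb : 0 < μ {ω | Z ω < b}) : ∫ ω, max (Z ω) a ∂μ < ∫ ω, max (Z ω) b ∂μ := by
  rw [← sub_pos, ← integral_sub (hZ.max_const b) (hZ.max_const a)]
  refine (integral_pos_iff_support_of_nonneg (fun ω => sub_nonneg.mpr (max_le_max le_rfl hab.le))
    ((hZ.max_const b).sub (hZ.max_const a))).mpr (hb.trans_le (measure_mono fun ω hω => ?_))
  have hω : Z ω < b := hω
  simp only [Function.mem_support, max_eq_right hω.le]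
  exact sub_ne_zero.mpr (max_lt hω hab).ne'

lemma stopValue_strictMono [IsFiniteMeasure μ] (hZ : Integrable Z μ)
    (hpos : ∀ b, 0 < b → 0 < μ {ω | Z ω < b}) (hc : c < ∫ ω, Z ω ∂μ) :
    StrictMono (stopValue μ Z c) := by
  have hsucc_pos : ∀ d, 0 < stopValue μ Z c (d + 1) := fun d =>
    (sub_pos.mpr hc).trans_le (integral_sub_le_stopValue_succ hZ d)
  refine strictMono_nat_of_lt_succ fun d => ?_
  induction d with
  | zero => exact hsucc_pos 0
  | succ d ih =>
    exact sub_lt_sub_right (integral_max_lt_integral_max hZ ih (hpos _ (hsucc_pos d))) c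

end StopValue

section FirstAtLeast

variable {Ω : Type*} {X : ℕ → Ω → ℝ} {t : ℕ → ℝ} {k : ℕ}

/-- When no `j ≥ 1` reaches its threshold, this is the junk value `sInf ∅ = 0`. -/
noncomputable def firstAtLeast (X : ℕ → Ω → ℝ) (t : ℕ → ℝ) (ω : Ω) : ℕ :=
  sInf {j | 1 ≤ j ∧ t j ≤ X j ω}

lemma firstAtLeast_eq_iff (hk : 1 ≤ k) (hX : ∀ ω, t k ≤ X k ω) (ω : Ω) (i : ℕ) :
    firstAtLeast X t ω = i ↔ (1 ≤ i ∧ t i ≤ X i ω) ∧ ∀ j, 1 ≤ j → j < i → X j ω < t j := by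
  have hmem : firstAtLeast X t ω ∈ {j | 1 ≤ j ∧ t j ≤ X j ω} := Nat.sInf_mem ⟨k, hk, hX ω⟩
  constructor
  · rintro rfl
    refine ⟨hmem, fun j hj hji => not_le.mp fun hle => ?_⟩
    exact Nat.notMem_of_lt_sInf hji ⟨hj, hle⟩
  · rintro ⟨hi, hbefore⟩
    refine le_antisymm (Nat.sInf_le hi) (not_lt.mp fun hlt => ?_)
    exact (hbefore _ hmem.1 hlt).not_ge hmem.2

lemma firstAtLeast_mem_Icc (hk : 1 ≤ k) (hX : ∀ ω, t k ≤ X k ω) (ω : Ω) :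
    firstAtLeast X t ω ∈ Finset.Icc 1 k := by
  have h := (firstAtLeast_eq_iff hk hX ω _).mp rfl
  refine Finset.mem_Icc.mpr ⟨h.1.1, ?_⟩
  by_contra! hlt
  exact (h.2 k hk hlt).not_ge (hX ω)

lemma isStopRule_firstAtLeast (hk : 1 ≤ k) (hX : ∀ ω, t k ≤ X k ω) :
    IsStopRule X k (firstAtLeast X t) := by
  refine ⟨firstAtLeast_mem_Icc hk hX, fun i hi => ?_⟩
  have hi1 := (Finset.mem_Icc.mp hi).1
  have h : {ω | firstAtLeast X t ω = i} =
      X i ⁻¹' Set.Ici (t i) ∩ ⋂ j ∈ Finset.Ico 1 i, X j ⁻¹' Set.Iio (t j) := by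
    ext ω
    simp [firstAtLeast_eq_iff hk hX, hi1]
  rw [h]
  refine (measurableSet_priorSigma_preimage (Finset.mem_Icc.mpr ⟨hi1, le_rfl⟩)
    measurableSet_Ici).inter (Finset.measurableSet_biInter _ fun j hj => ?_)
  have hj := Finset.mem_Ico.mp hj
  exact measurableSet_priorSigma_preimage (Finset.mem_Icc.mpr ⟨hj.1, hj.2.le⟩) measurableSet_Iio

end FirstAtLeast

section StageRegret

variable {Ω : Type*} {X : ℕ → Ω → ℝ}

/-- What `τ` loses at stage `j`, if it gets there, against the better of stopping with `X j` and
continuing with expected value `w`. -/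
noncomputable def stageRegret (X : ℕ → Ω → ℝ) (τ : Ω → ℕ) (j : ℕ) (w : ℝ) (ω : Ω) : ℝ :=
  {ω | j ≤ τ ω}.indicator (fun ω => max (X j ω) w) ω - {ω | τ ω = j}.indicator (X j) ω
    - {ω | j < τ ω}.indicator (fun _ => w) ω

lemma stageRegret_nonneg (τ : Ω → ℕ) (j : ℕ) (w : ℝ) (ω : Ω) : 0 ≤ stageRegret X τ j w ω := by
  simp only [stageRegret, Set.indicator_apply, Set.mem_ofPred_eq]
  split_ifs <;> first | omega | simp

lemma stageRegret_firstAtLeast_eq_zero {t : ℕ → ℝ} {k : ℕ} (hk : 1 ≤ k) (hX : ∀ ω, t k ≤ X k ω)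
    {j : ℕ} (hj : 1 ≤ j) (ω : Ω) : stageRegret X (firstAtLeast X t) j (t j) ω = 0 := by
  have hstop := ((firstAtLeast_eq_iff hk hX ω _).mp rfl).1.2
  have hgo : j < firstAtLeast X t ω → X j ω < t j :=
    ((firstAtLeast_eq_iff hk hX ω _).mp rfl).2 j hj
  rcases lt_trichotomy j (firstAtLeast X t ω) with hlt | rfl | hgt
  · simp [stageRegret, hlt.le, hlt.ne', hlt, max_eq_right (hgo hlt).le]
  · simp [stageRegret, hstop]
  · simp [stageRegret, hgt.not_ge, hgt.ne, hgt.not_gt]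

end StageRegret

section Value

variable {Ω : Type*} [MeasurableSpace Ω] {μ : Measure Ω} {X Y : ℕ → Ω → ℝ} {c : ℝ} {n k : ℕ}
  {τ : Ω → ℕ}

lemma integral_indicator_max_eq (hX : ∀ i, Measurable (X i))
    (hindep : iIndepFun (fun i : Fin n => X (i.1 + 1)) μ)
    (hident : ∀ i ∈ Set.Icc 1 n, IdentDistrib (X i) (X 1) μ μ) {i : ℕ} (hi : i < n)
    {B : Set Ω} (hB : MeasurableSet[priorSigma X i] B) (v : ℝ) :
    ∫ ω, B.indicator (fun ω => max (X (i + 1) ω) v) ω ∂μ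
      = μ.real B * ∫ ω, max (X 1 ω) v ∂μ := by
  have hmax : Measurable fun x : ℝ => max x v := measurable_id.max measurable_const
  rw [integral_indicator (priorSigma_le hX i B hB),
    (indep_priorSigma_comap hX hindep hi).setIntegral_eq_mul (f := fun x => max x v)
      (priorSigma_le hX i) (hX (i + 1)).aemeasurable hB hmax.aestronglyMeasurable]
  exact congrArg _ ((hident (i + 1) ⟨by omega, by omega⟩).comp hmax).integral_eq

lemma integral_indicator_stage_eq [IsProbabilityMeasure μ] (hX : ∀ i, Measurable (X i))
    (hindep : iIndepFun (fun i : Fin n => X (i.1 + 1)) μ)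
    (hident : ∀ i ∈ Set.Icc 1 n, IdentDistrib (X i) (X 1) μ μ)
    (hval : ∀ i ∈ Set.Icc 1 n, ∀ ω, X i ω ∈ Set.Icc (0 : ℝ) 1)
    (hY : ∀ i ω, Y i ω = X i ω - i * c) (hτ : IsStopRule X k τ) (hkn : k ≤ n)
    {i : ℕ} (hik : i < k) :
    ∫ ω, {ω | τ ω = i + 1}.indicator (Y (i + 1)) ω ∂μ
      = μ.real {ω | i < τ ω} * (stopValue μ (X 1) c (k - i) - i * c)
        - μ.real {ω | i + 1 < τ ω} * (stopValue μ (X 1) c (k - (i + 1)) - (i + 1 : ℕ) * c)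
        - ∫ ω, stageRegret X τ (i + 1) (stopValue μ (X 1) c (k - (i + 1))) ω ∂μ := by
  set v := stopValue μ (X 1) c (k - (i + 1))
  have hin : i < n := by omega
  have hEq : MeasurableSet {ω | τ ω = i + 1} := priorSigma_le hX _ _ (hτ.measurableSet_eq _)
  have hGe : MeasurableSet {ω | i < τ ω} := priorSigma_le hX _ _ (hτ.measurableSet_lt _)
  have hGt : MeasurableSet {ω | i + 1 < τ ω} := priorSigma_le hX _ _ (hτ.measurableSet_lt _)
  have hXi : Integrable (X (i + 1)) μ :=
    .of_mem_Icc 0 1 (hX _).aemeasurable (ae_of_all _ (hval _ ⟨by omega, hin⟩))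
  have hcont : ∫ ω, {ω | i < τ ω}.indicator (fun ω => max (X (i + 1) ω) v) ω ∂μ
      = μ.real {ω | i < τ ω} * (stopValue μ (X 1) c (k - i) + c) := by
    rw [integral_indicator_max_eq hX hindep hident hin (hτ.measurableSet_lt i),
      show k - i = k - (i + 1) + 1 by omega, stopValue, sub_add_cancel]
  have hregret : ∫ ω, stageRegret X τ (i + 1) v ω ∂μ
      = ∫ ω, {ω | i < τ ω}.indicator (fun ω => max (X (i + 1) ω) v) ω ∂μ
        - ∫ ω, {ω | τ ω = i + 1}.indicator (X (i + 1)) ω ∂μ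
        - μ.real {ω | i + 1 < τ ω} * v := by
    have hmax := (hXi.max_const v).indicator hGe
    have hstop := hXi.indicator hEq
    have hgo := (integrable_const (μ := μ) v).indicator hGt
    rw [← smul_eq_mul, ← integral_indicator_const _ hGt, ← integral_sub' hmax hstop,
      ← integral_sub' (hmax.sub hstop) hgo]
    rfl
  have hcost : ∫ ω, {ω | τ ω = i + 1}.indicator (Y (i + 1)) ω ∂μ
      = ∫ ω, {ω | τ ω = i + 1}.indicator (X (i + 1)) ω ∂μ
        - μ.real {ω | τ ω = i + 1} * ((i + 1 : ℕ) * c) := by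
    rw [← smul_eq_mul, ← integral_indicator_const _ hEq,
      ← integral_sub (hXi.indicator hEq) ((integrable_const _).indicator hEq)]
    congr 1 with ω
    by_cases hω : ω ∈ {ω | τ ω = i + 1} <;> simp [hω, hY]
  have hsplit : μ.real {ω | i < τ ω} = μ.real {ω | τ ω = i + 1} + μ.real {ω | i + 1 < τ ω} := by
    rw [← measureReal_union (Set.disjoint_left.mpr fun ω h1 h2 => by simp_all) hGt]
    congr 1 with ω
    simp only [Set.mem_ofPred_eq, Set.mem_union]
    omega
  rw [hcost, hregret, hcont, hsplit]
  push_cast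
  ring

lemma integral_stopped_eq_stopValue_sub [IsProbabilityMeasure μ] (hX : ∀ i, Measurable (X i))
    (hindep : iIndepFun (fun i : Fin n => X (i.1 + 1)) μ)
    (hident : ∀ i ∈ Set.Icc 1 n, IdentDistrib (X i) (X 1) μ μ)
    (hval : ∀ i ∈ Set.Icc 1 n, ∀ ω, X i ω ∈ Set.Icc (0 : ℝ) 1)
    (hY : ∀ i ω, Y i ω = X i ω - i * c) (hτ : IsStopRule X k τ) (hkn : k ≤ n) :
    ∫ ω, Y (τ ω) ω ∂μ = stopValue μ (X 1) c k - ∑ i ∈ Finset.range k,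
      ∫ ω, stageRegret X τ (i + 1) (stopValue μ (X 1) c (k - (i + 1))) ω ∂μ := by
  -- `q i`: on `{i < τ}`, the value of continuing optimally after `i` observations
  set q : ℕ → ℝ := fun i => μ.real {ω | i < τ ω} * (stopValue μ (X 1) c (k - i) - i * c)
  have hq0 : q 0 = stopValue μ (X 1) c k := by
    have h : {ω | 0 < τ ω} = Set.univ :=
      Set.eq_univ_of_forall fun ω => (Finset.mem_Icc.mp (hτ.1 ω)).1
    simp [q, h]
  have hqk : q k = 0 := by
    have h : {ω | k < τ ω} = ∅ :=
      Set.eq_empty_of_forall_notMem fun ω h => (Finset.mem_Icc.mp (hτ.1 ω)).2.not_gt h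
    simp [q, h]
  have hint : ∀ i ∈ Finset.range k, Integrable ({ω | τ ω = i + 1}.indicator (Y (i + 1))) μ := by
    intro i hi
    have hik := Finset.mem_range.mp hi
    have hXi : Integrable (X (i + 1)) μ :=
      .of_mem_Icc 0 1 (hX _).aemeasurable (ae_of_all _ (hval _ ⟨by omega, by omega⟩))
    rw [show Y (i + 1) = fun ω => X (i + 1) ω - (i + 1 : ℕ) * c from funext (hY _)]
    exact (hXi.sub (integrable_const _)).indicator
      (priorSigma_le hX _ _ (hτ.measurableSet_eq _))
  calc ∫ ω, Y (τ ω) ω ∂μ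
      = ∑ i ∈ Finset.range k, ∫ ω, {ω | τ ω = i + 1}.indicator (Y (i + 1)) ω ∂μ := by
        simp_rw [hτ.apply_eq_sum Y]
        exact integral_finsetSum _ hint
    _ = ∑ i ∈ Finset.range k, (q i - q (i + 1)
          - ∫ ω, stageRegret X τ (i + 1) (stopValue μ (X 1) c (k - (i + 1))) ω ∂μ) :=
        Finset.sum_congr rfl fun i hi => integral_indicator_stage_eq hX hindep hident hval hY hτ
          hkn (Finset.mem_range.mp hi)
    _ = _ := by rw [Finset.sum_sub_distrib, Finset.sum_range_sub', hq0, hqk, sub_zero]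

lemma isGreatest_stopValue [IsProbabilityMeasure μ] (hX : ∀ i, Measurable (X i))
    (hindep : iIndepFun (fun i : Fin n => X (i.1 + 1)) μ)
    (hident : ∀ i ∈ Set.Icc 1 n, IdentDistrib (X i) (X 1) μ μ)
    (hval : ∀ i ∈ Set.Icc 1 n, ∀ ω, X i ω ∈ Set.Icc (0 : ℝ) 1)
    (hY : ∀ i ω, Y i ω = X i ω - i * c) (hk : 1 ≤ k) (hkn : k ≤ n) :
    IsGreatest {r | ∃ τ, IsStopRule Y k τ ∧ r = ∫ ω, Y (τ ω) ω ∂μ} (stopValue μ (X 1) c k) := by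
  simp_rw [isStopRule_iff_of_sub hY]
  set t : ℕ → ℝ := fun j => stopValue μ (X 1) c (k - j)
  have ht : ∀ ω, t k ≤ X k ω := fun ω => by
    simpa [t, stopValue] using (hval k ⟨hk, hkn⟩ ω).1
  have hσ := isStopRule_firstAtLeast hk ht
  have hregret : ∀ i, ∫ ω, stageRegret X (firstAtLeast X t) (i + 1) (t (i + 1)) ω ∂μ = 0 :=
    fun i => by simp [stageRegret_firstAtLeast_eq_zero hk ht (Nat.succ_pos i)]
  constructor
  · refine ⟨firstAtLeast X t, hσ, ?_⟩
    rw [integral_stopped_eq_stopValue_sub hX hindep hident hval hY hσ hkn]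
    exact (sub_eq_self.mpr (Finset.sum_eq_zero fun i _ => hregret i)).symm
  · rintro r ⟨τ, hτ, rfl⟩
    rw [integral_stopped_eq_stopValue_sub hX hindep hident hval hY hτ hkn]
    exact sub_le_self _ (Finset.sum_nonneg fun i _ => integral_nonneg (stageRegret_nonneg τ _ _))

end Value

theorem stmt10_general
    {Ω : Type*} [MeasurableSpace Ω] (μ : Measure Ω) [IsProbabilityMeasure μ]
    (n : ℕ) (X : ℕ → Ω → ℝ)
    (hmeas : ∀ i, Measurable (X i))
    (hindep : iIndepFun (fun i : Fin n => X (i.1 + 1)) μ)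
    (hident : ∀ i ∈ Set.Icc 1 n, IdentDistrib (X i) (X 1) μ μ)
    (hval : ∀ i ∈ Set.Icc 1 n, ∀ ω, X i ω ∈ Set.Icc (0:ℝ) 1)
    (c : ℝ) (Y : ℕ → Ω → ℝ) (hY : ∀ i ω, Y i ω = X i ω - i * c)
    (hinf : sInf {x : ℝ | 0 < μ {ω | X 1 ω ≤ x}} = 0)
    (hn : 2 ≤ n) (hc : 0 < c) (hEX : c < ∫ ω, X 1 ω ∂μ) :
    Vn μ Y (n-1) < 1 ∧
    (∀ i, 1 ≤ i → i + 1 ≤ n - 1 → Vn μ Y i < Vn μ Y (i+1)) ∧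
    0 < Vn μ Y 1 := by
  have hV : ∀ k, 1 ≤ k → k ≤ n → Vn μ Y k = stopValue μ (X 1) c k := fun k hk hkn =>
    (isGreatest_stopValue hmeas hindep hident hval hY hk hkn).csSup_eq
  have hX1 : ∀ ω, X 1 ω ∈ Set.Icc (0 : ℝ) 1 := hval 1 ⟨le_rfl, by omega⟩
  have hint : Integrable (X 1) μ := .of_mem_Icc 0 1 (hmeas 1).aemeasurable (ae_of_all _ hX1)
  have hmass : ∀ b, 0 < b → 0 < μ {ω | X 1 ω < b} := fun b hb =>
    measure_lt_pos_of_sInf_lt ⟨1, by simp [fun ω => (hX1 ω).2]⟩ (hinf ▸ hb)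
  have hmono := stopValue_strictMono hint hmass hEX
  refine ⟨?_, fun i hi hin => ?_, ?_⟩
  · obtain ⟨d, hd⟩ : ∃ d, n - 1 = d + 1 := ⟨n - 2, by omega⟩
    rw [hV _ (by omega) (by omega), hd]
    linarith [stopValue_succ_le hint (fun ω => (hX1 ω).2) hc.le d]
  · rw [hV i hi (by omega), hV (i + 1) (by omega) (by omega)]
    exact hmono (Nat.lt_succ_self i)
  · rw [hV 1 le_rfl (by omega)]
    exact hmono zero_lt_one

theorem stmt10
    {Ω : Type*} [MeasurableSpace Ω] (μ : Measure Ω) [IsProbabilityMeasure μ]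
    (n : ℕ) (X : ℕ → Ω → ℝ)
    (hmeas : ∀ i, Measurable (X i))
    (hindep : iIndepFun (fun i : Fin n => X (i.1 + 1)) μ)
    (hident : ∀ i ∈ Set.Icc 1 n, IdentDistrib (X i) (X 1) μ μ)
    (hval : ∀ i ∈ Set.Icc 1 n, ∀ ω, X i ω ∈ Set.Icc (0:ℝ) 1)
    (c : ℝ) (Y : ℕ → Ω → ℝ) (hY : ∀ i ω, Y i ω = X i ω - i * c)
    (hinf : sInf {x : ℝ | 0 < μ {ω | X 1 ω ≤ x}} = 0)
    (hsup : sSup {x : ℝ | μ {ω | X 1 ω ≤ x} < 1} = 1)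
    (hn : 2 ≤ n) (hc : 0 < c) (hEX : c < ∫ ω, X 1 ω ∂μ) :
    Vn μ Y (n-1) < 1 ∧
    (∀ i, 1 ≤ i → i + 1 ≤ n - 1 → Vn μ Y i < Vn μ Y (i+1)) ∧
    0 < Vn μ Y 1 :=
  stmt10_general μ n X hmeas hindep hident hval c Y hY hinf hn hc hEX
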